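/- arXiv:2206.08777 — 2 statements merged into one kernel-verified Lean document; each statement's English description precedes it below -/
import Mathlib

section
/- For complex numbers α, β with Re(β) > -1 and Re(α+β) < -1, the integral ∫₁^∞ x^α (x-1)^β dx equals B(-α-β-1, β+1), where B is the Beta function. -/
open Complex MeasureTheory

theorem integral_Ioi_one_pow_mul_sub_one_pow (α β : ℂ)
    (hβ : -1 < β.re) (hαβ : (α + β).re < -1) :
    ∫ x in Set.Ioi (1:ℝ), (x : ℂ) ^ α * ((x : ℂ) - 1) ^ β
      = Complex.Gamma (-α - β - 1) * Complex.Gamma (β + 1) / Complex.Gamma (-α) := by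
  have himg : (fun u : ℝ => u⁻¹) '' Set.Ioo 0 1 = Set.Ioi 1 := by
    ext x
    constructor
    · rintro ⟨u, ⟨hu0, hu1⟩, rfl⟩
      exact (one_lt_inv_iff₀).2 ⟨hu0, hu1⟩
    · intro hx
      exact ⟨x⁻¹, ⟨inv_pos.2 (lt_trans one_pos hx), inv_lt_one_of_one_lt₀ hx⟩,
        inv_inv x⟩
  rw [← himg, integral_image_eq_integral_abs_deriv_smul measurableSet_Ioo
      (fun u hu => (hasDerivAt_inv (ne_of_gt hu.1)).hasDerivWithinAt)
      (fun x _ y _ h => inv_injective h)]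
  have hcongr : ∀ u ∈ Set.Ioo (0:ℝ) 1,
      |(-(u^2)⁻¹)| • (((u⁻¹ : ℝ) : ℂ) ^ α * (((u⁻¹ : ℝ) : ℂ) - 1) ^ β)
        = (u : ℂ) ^ (-α - β - 2) * ((1 - u : ℝ) : ℂ) ^ β := by
    intro u hu
    obtain ⟨hu0, hu1⟩ := hu
    have huc : (u : ℂ) ≠ 0 := ofReal_ne_zero.2 hu0.ne'
    have harg : (u : ℂ).arg ≠ Real.pi := by
      rw [Complex.arg_ofReal_of_nonneg hu0.le]
      exact Real.pi_ne_zero.symm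
    have h1 : (((u⁻¹ : ℝ) : ℂ)) = (u : ℂ)⁻¹ := by push_cast; ring
    have h2 : (((u⁻¹ : ℝ) : ℂ)) - 1 = (((1 - u) * u⁻¹ : ℝ) : ℂ) := by
      push_cast
      field_simp
    have h3 : ((u : ℂ)⁻¹) ^ α = (u : ℂ) ^ (-α) := by
      rw [Complex.inv_cpow _ _ harg, ← Complex.cpow_neg]
    have h4 : ((u : ℂ)⁻¹) ^ β = (u : ℂ) ^ (-β) := by
      rw [Complex.inv_cpow _ _ harg, ← Complex.cpow_neg]
    rw [h2, ofReal_mul, mul_cpow_ofReal_nonneg (by linarith) (inv_pos.2 hu0).le, h1,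
      h3, h4]
    have habs : |(-(u^2)⁻¹)| = (u^2)⁻¹ := by
      rw [abs_neg, abs_inv, _root_.abs_of_nonneg (sq_nonneg u)]
    rw [habs, real_smul, ofReal_inv, ofReal_pow]
    have h5 : ((u : ℂ)^2)⁻¹ = (u : ℂ) ^ (-2 : ℂ) := by
      rw [show ((-2 : ℂ)) = -(2:ℕ) by norm_num, Complex.cpow_neg,
        Complex.cpow_natCast]
    rw [h5, show (-α - β - 2 : ℂ) = -2 + (-α + -β) by ring,
      Complex.cpow_add _ _ huc, Complex.cpow_add _ _ huc]
    ring
  rw [setIntegral_congr_fun measurableSet_Ioo hcongr]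
  have hu' : 0 < (-α - β - 1).re := by
    simp only [sub_re, neg_re, one_re, add_re] at *
    linarith
  have hv' : 0 < (β + 1).re := by
    simp only [add_re, one_re]; linarith
  have hbeta := Complex.Gamma_mul_Gamma_eq_betaIntegral hu' hv'
  have hsum : (-α - β - 1) + (β + 1) = -α := by ring
  rw [hsum] at hbeta
  have hΓ : Complex.Gamma (-α) ≠ 0 := by
    apply Complex.Gamma_ne_zero_of_re_pos
    simp only [neg_re, add_re] at *
    linarith
  have hbi : Complex.betaIntegral (-α - β - 1) (β + 1)
      = Complex.Gamma (-α - β - 1) * Complex.Gamma (β + 1) / Complex.Gamma (-α) := by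
    rw [hbeta]; field_simp
  rw [← hbi, Complex.betaIntegral]
  rw [intervalIntegral.integral_of_le zero_le_one, ← integral_Ioc_eq_integral_Ioo]
  apply setIntegral_congr_fun measurableSet_Ioc
  intro x _
  rw [show (-α - β - 1 - 1 : ℂ) = -α - β - 2 by ring, show (β + 1 - 1 : ℂ) = β by ring]
  push_cast
  ring
end

section
/- For ε ∈ {0,1}, m ∈ 2ℤ+ε and μ ∈ ℂ, define b_m^ε(μ) = √π · i^{ε} · (-1)^{(m+|m|)/2 - ε} · ((1+ε-μ)/2)_{(|m|-ε)/2} / Γ((μ+1+|m|)/2), where (x)_n is the Pochhammer symbol. Then: (a) if ε = 0 and μ ∈ 1-2ℕ, then b_m^0(μ) ≥ 0 for all m ∈ 2ℤ; (b) if ε = 1 and μ ∈ -2ℕ, then for m odd, -i·b_m^1(μ) ≥ 0 when m > 0 and i·b_m^1(μ) ≥ 0 when m < 0. -/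
open Complex Real

lemma poch_cast (n k : ℕ) : Polynomial.eval (k:ℂ) (ascPochhammer ℂ n) = (k.ascFactorial n : ℂ) := by
  rw [← ascPochhammer_eval_cast ℂ n k, ascPochhammer_nat_eq_ascFactorial]

lemma main_aux (a k j : ℕ) :
    ∃ r : ℝ, 0 ≤ r ∧
      (Real.sqrt π : ℂ) * Polynomial.eval (j : ℂ) (ascPochhammer ℂ a) /
        Complex.Gamma ((a : ℂ) + 1 - k) = (r : ℂ) := by
  rcases le_or_gt k a with h | h
  · refine ⟨Real.sqrt π * (j.ascFactorial a) / (a - k).factorial, by positivity, ?_⟩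
    have h1 : ((a:ℂ) + 1 - k) = ((a - k : ℕ) : ℂ) + 1 := by
      push_cast [h]; ring
    rw [h1, Complex.Gamma_nat_eq_factorial, poch_cast]
    push_cast; ring
  · refine ⟨0, le_rfl, ?_⟩
    have h1 : ((a:ℂ) + 1 - k) = -((k - a - 1 : ℕ) : ℂ) := by
      have : a + 1 ≤ k := h
      push_cast [Nat.sub_sub, this]; ring
    rw [h1, Complex.Gamma_neg_nat_eq_zero, div_zero, Complex.ofReal_zero]


/-- The eigenvalue `b_m^ε(μ)` of the Knapp–Stein operator on the `K`-type `ζ_m`. -/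
noncomputable def bEig (ε : ℕ) (m : ℤ) (μ : ℂ) : ℂ :=
  (Real.sqrt π : ℂ) * I ^ ε * (-1 : ℂ) ^ ((m + |m|) / 2 - (ε : ℤ)) *
    Polynomial.eval ((1 + (ε : ℂ) - μ) / 2) (ascPochhammer ℂ (((|m| - (ε : ℤ)) / 2).toNat)) /
    Complex.Gamma ((μ + 1 + (|m| : ℤ)) / 2)

theorem bEig_sign :
    (∀ m : ℤ, m % 2 = 0 → ∀ k : ℕ, 1 ≤ k →
      ∃ r : ℝ, 0 ≤ r ∧ bEig 0 m (1 - 2 * k) = (r : ℂ)) ∧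
    (∀ m : ℤ, m % 2 = 1 ∨ m % 2 = -1 → ∀ k : ℕ, 1 ≤ k →
      (0 < m → ∃ r : ℝ, 0 ≤ r ∧ -I * bEig 1 m (-(2 * k)) = (r : ℂ)) ∧
      (m < 0 → ∃ r : ℝ, 0 ≤ r ∧ I * bEig 1 m (-(2 * k)) = (r : ℂ))) := by
  constructor
  · intro m hm k hk
    set a := m.natAbs / 2 with ha
    have habs : |m| = 2 * (a : ℤ) := by
      rw [Int.abs_eq_natAbs]; omega
    have e1 : ((|m| - ((0:ℕ):ℤ)) / 2).toNat = a := by rw [habs]; omega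
    have e2 : ((1 : ℂ) + ((0:ℕ):ℂ) - (1 - 2 * k)) / 2 = (k : ℂ) := by push_cast; ring
    have e3 : (((1 : ℂ) - 2 * k) + 1 + ((|m| : ℤ) : ℂ)) / 2 = (a : ℂ) + 1 - k := by
      rw [habs]; push_cast; ring
    have e4 : (-1:ℂ) ^ ((m + |m|) / 2 - ((0:ℕ):ℤ)) = 1 := by
      refine Even.neg_one_zpow ?_
      rw [Int.even_iff, Int.abs_eq_natAbs]; omega
    obtain ⟨r, hr, he⟩ := main_aux a k k
    refine ⟨r, hr, ?_⟩
    rw [bEig, e1, e2, e3, e4]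
    simpa using he
  · intro m hm k hk
    set a := m.natAbs / 2 with ha
    have habs : |m| = 2 * (a : ℤ) + 1 := by
      rw [Int.abs_eq_natAbs]; omega
    have e1 : ((|m| - ((1:ℕ):ℤ)) / 2).toNat = a := by rw [habs]; omega
    have e2 : ((1 : ℂ) + ((1:ℕ):ℂ) - (-(2 * k))) / 2 = ((k + 1 : ℕ) : ℂ) := by push_cast; ring
    have e3 : ((-(2 * (k:ℂ))) + 1 + ((|m| : ℤ) : ℂ)) / 2 = (a : ℂ) + 1 - k := by
      rw [habs]; push_cast; ring
    obtain ⟨r, hr, he⟩ := main_aux a k (k + 1)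
    constructor
    · intro hpos
      have e4 : (-1:ℂ) ^ ((m + |m|) / 2 - ((1:ℕ):ℤ)) = 1 := by
        refine Even.neg_one_zpow ?_
        rw [Int.even_iff, Int.abs_eq_natAbs]; omega
      refine ⟨r, hr, ?_⟩
      rw [bEig, e1, e2, e3, e4, ← he, pow_one]
      set P := Polynomial.eval ((k + 1 : ℕ) : ℂ) (ascPochhammer ℂ a)
      set G := Complex.Gamma ((a : ℂ) + 1 - k)
      linear_combination (-((Real.sqrt π : ℂ) * P / G)) * Complex.I_sq
    · intro hneg
      have e4 : (-1:ℂ) ^ ((m + |m|) / 2 - ((1:ℕ):ℤ)) = -1 := by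
        have : (m + |m|) / 2 - ((1:ℕ):ℤ) = -1 := by
          rw [Int.abs_eq_natAbs]; omega
        rw [this, zpow_neg_one, inv_neg, inv_one]
      refine ⟨r, hr, ?_⟩
      rw [bEig, e1, e2, e3, e4, ← he, pow_one]
      set P := Polynomial.eval ((k + 1 : ℕ) : ℂ) (ascPochhammer ℂ a)
      set G := Complex.Gamma ((a : ℂ) + 1 - k)
      linear_combination (-((Real.sqrt π : ℂ) * P / G)) * Complex.I_sq
end
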